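/- arXiv:math/0405145 — 7 statements merged into one kernel-verified Lean document; each statement's English description precedes it below -/
import Mathlib

section
/- Let H = (H, m, u, Δ, ε, T) be a weak Hopf algebra over a field k whose weak antipode T is an invertible anti-bialgebra morphism, so that H^op = (H, m^op, u, Δ, ε) is a weak Hopf algebra with weak antipode T^{-1}. Then H is perfect with respect to T if and only if H^op is perfect with respect to T^{-1}. -/
noncomputable section

open TensorProduct

/-- The data of a (weak) bialgebra on a `k`-vector space `H`:
multiplication, unit, comultiplication and counit, all as linear maps. -/
structure BialgData (k : Type) [Field k] (H : Type) [AddCommGroup H] [Module k H] where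
  mul : H ⊗[k] H →ₗ[k] H
  one : H
  comul : H →ₗ[k] H ⊗[k] H
  counit : H →ₗ[k] k

namespace BialgData

variable {k : Type} [Field k] {H : Type} [AddCommGroup H] [Module k H]

/-- The axioms making `BialgData` an honest bialgebra. -/
structure IsBialgebra (B : BialgData k H) : Prop where
  mul_assoc : ∀ x y z : H, B.mul (B.mul (x ⊗ₜ y) ⊗ₜ z) = B.mul (x ⊗ₜ B.mul (y ⊗ₜ z))
  one_mul : ∀ x : H, B.mul (B.one ⊗ₜ x) = x
  mul_one : ∀ x : H, B.mul (x ⊗ₜ B.one) = x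
  coassoc : ∀ x : H,
    (TensorProduct.assoc k H H H) ((TensorProduct.map B.comul LinearMap.id) (B.comul x))
      = (TensorProduct.map LinearMap.id B.comul) (B.comul x)
  counit_comul : ∀ x : H,
    (TensorProduct.lid k H) ((TensorProduct.map B.counit LinearMap.id) (B.comul x)) = x
  comul_counit : ∀ x : H,
    (TensorProduct.rid k H) ((TensorProduct.map LinearMap.id B.counit) (B.comul x)) = x
  comul_mul : ∀ x y : H,
    B.comul (B.mul (x ⊗ₜ y)) =
      (TensorProduct.map B.mul B.mul)
        ((TensorProduct.tensorTensorTensorComm k H H H H) (B.comul x ⊗ₜ B.comul y))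
  comul_one : B.comul B.one = B.one ⊗ₜ B.one
  counit_mul : ∀ x y : H, B.counit (B.mul (x ⊗ₜ y)) = B.counit x * B.counit y
  counit_one : B.counit B.one = 1

/-- Convolution product of linear endomorphisms: `f ∗ g = mul ∘ (f ⊗ g) ∘ comul`. -/
def conv (B : BialgData k H) (f g : H →ₗ[k] H) : H →ₗ[k] H :=
  B.mul ∘ₗ TensorProduct.map f g ∘ₗ B.comul

/-- `T` is a weak antipode: `id ∗ T ∗ id = id` and `T ∗ id ∗ T = T`. -/
def IsWeakAntipode (B : BialgData k H) (T : H →ₗ[k] H) : Prop :=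
  B.conv (B.conv LinearMap.id T) LinearMap.id = LinearMap.id ∧
    B.conv (B.conv T LinearMap.id) T = T

/-- `T` is an anti-bialgebra morphism: `T(xy) = T(y)T(x)`, `T(1) = 1`,
`Δ(T x) = Σ T(x'') ⊗ T(x')` and `ε ∘ T = ε`. -/
def IsAntiBialgebraHom (B : BialgData k H) (T : H →ₗ[k] H) : Prop :=
  (∀ x y : H, T (B.mul (x ⊗ₜ y)) = B.mul (T y ⊗ₜ T x)) ∧
  T B.one = B.one ∧
  (∀ x : H, B.comul (T x) =
    (TensorProduct.comm k H H) ((TensorProduct.map T T) (B.comul x))) ∧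
  ∀ x : H, B.counit (T x) = B.counit x

/-- `H` is perfect: `T` is an anti-bialgebra morphism and `(id ∗ T)(H) ⊆ C(H)`,
i.e. `Σ x'T(x'')` is central for every `x`. -/
def Perfect (B : BialgData k H) (T : H →ₗ[k] H) : Prop :=
  B.IsAntiBialgebraHom T ∧
    ∀ x y : H,
      B.mul ((B.conv LinearMap.id T) x ⊗ₜ y) = B.mul (y ⊗ₜ (B.conv LinearMap.id T) x)

/-- `H` is coperfect: `T` is an anti-bialgebra morphism and
`Σ x'T(x'') ⊗ x''' = Σ x''T(x''') ⊗ x'` for every `x`. -/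
def Coperfect (B : BialgData k H) (T : H →ₗ[k] H) : Prop :=
  B.IsAntiBialgebraHom T ∧
    ∀ x : H,
      (TensorProduct.map (B.conv LinearMap.id T) LinearMap.id) (B.comul x)
        = (TensorProduct.comm k H H)
            ((TensorProduct.map LinearMap.id (B.conv LinearMap.id T)) (B.comul x))

/-- `H` is biperfect: perfect and coperfect. -/
def Biperfect (B : BialgData k H) (T : H →ₗ[k] H) : Prop :=
  B.Perfect T ∧ B.Coperfect T

/-- The opposite bialgebra `H^op`: same coalgebra, opposite multiplication. -/
def op (B : BialgData k H) : BialgData k H :=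
  { B with mul := B.mul ∘ₗ (TensorProduct.comm k H H).toLinearMap }

/-- The co-opposite bialgebra `H^cop`: same algebra, opposite comultiplication. -/
def cop (B : BialgData k H) : BialgData k H :=
  { B with comul := (TensorProduct.comm k H H).toLinearMap ∘ₗ B.comul }

/-- `H` is commutative. -/
def Commutative (B : BialgData k H) : Prop :=
  ∀ x y : H, B.mul (x ⊗ₜ y) = B.mul (y ⊗ₜ x)

/-- `H` is cocommutative. -/
def Cocommutative (B : BialgData k H) : Prop :=
  ∀ x : H, (TensorProduct.comm k H H) (B.comul x) = B.comul x

/-- The dual weak Hopf algebra structure on `H* = Module.Dual k H` (for `H` finite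
dimensional): convolution multiplication `(fg)(x) = Σ f(x')g(x'')`, unit `ε`,
comultiplication dual to the multiplication of `H`, counit `f ↦ f 1`. -/
def dual (B : BialgData k H) [FiniteDimensional k H] :
    BialgData k (Module.Dual k H) where
  mul := B.comul.dualMap ∘ₗ TensorProduct.dualDistrib k H H
  one := B.counit
  comul := ((TensorProduct.dualDistribEquiv k H H).symm :
      Module.Dual k (H ⊗[k] H) →ₗ[k] Module.Dual k H ⊗[k] Module.Dual k H) ∘ₗ
    B.mul.dualMap
  counit := Module.Dual.eval k H B.one

section Reshuffle

variable (k)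
variable (M N P : Type) [AddCommGroup M] [AddCommGroup N] [AddCommGroup P]
  [Module k M] [Module k N] [Module k P]

/-- `(u ⊗ v) ⊗ w ↦ (u ⊗ w) ⊗ v`. -/
def swap23 : (M ⊗[k] N) ⊗[k] P →ₗ[k] (M ⊗[k] P) ⊗[k] N :=
  ((TensorProduct.assoc k M P N).symm : M ⊗[k] (P ⊗[k] N) →ₗ[k] (M ⊗[k] P) ⊗[k] N) ∘ₗ
    (TensorProduct.map LinearMap.id ((TensorProduct.comm k N P) : N ⊗[k] P →ₗ[k] P ⊗[k] N)) ∘ₗ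
      ((TensorProduct.assoc k M N P) : (M ⊗[k] N) ⊗[k] P →ₗ[k] M ⊗[k] (N ⊗[k] P))

/-- `(u ⊗ v) ⊗ w ↦ (w ⊗ u) ⊗ v`. -/
def rot3 : (M ⊗[k] N) ⊗[k] P →ₗ[k] (P ⊗[k] M) ⊗[k] N :=
  ((TensorProduct.assoc k P M N).symm : P ⊗[k] (M ⊗[k] N) →ₗ[k] (P ⊗[k] M) ⊗[k] N) ∘ₗ
    ((TensorProduct.comm k (M ⊗[k] N) P) : (M ⊗[k] N) ⊗[k] P →ₗ[k] P ⊗[k] (M ⊗[k] N))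

end Reshuffle

/-- The iterated comultiplication `x ↦ (x' ⊗ x'') ⊗ x'''`. -/
def comul2 (B : BialgData k H) : H →ₗ[k] (H ⊗[k] H) ⊗[k] H :=
  (TensorProduct.map B.comul LinearMap.id) ∘ₗ B.comul

/-- The convolution multiplication on `H*`: `(fg)(x) = Σ f(x') g(x'')`. -/
def dualMul (B : BialgData k H) :
    Module.Dual k H ⊗[k] Module.Dual k H →ₗ[k] Module.Dual k H :=
  B.comul.dualMap ∘ₗ TensorProduct.dualDistrib k H H

/-- The comultiplication on `H*` dual to the multiplication of `H`. -/
def dualComul (B : BialgData k H) [FiniteDimensional k H] :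
    Module.Dual k H →ₗ[k] Module.Dual k H ⊗[k] Module.Dual k H :=
  ((TensorProduct.dualDistribEquiv k H H).symm :
      Module.Dual k (H ⊗[k] H) →ₗ[k] Module.Dual k H ⊗[k] Module.Dual k H) ∘ₗ
    B.mul.dualMap

/-- `u ⊗ v ↦ (x ↦ T⁻¹(u) · x · v)`, where `Tinv = T⁻¹`. -/
def conjLin (B : BialgData k H) (Tinv : H →ₗ[k] H) : H ⊗[k] H →ₗ[k] (H →ₗ[k] H) :=
  TensorProduct.lift
    ((((LinearMap.llcomp k H H H) ∘ₗ (TensorProduct.curry B.mul).flip).compl₂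
        ((TensorProduct.curry B.mul) ∘ₗ Tinv)).flip)

/-- `g ⊗ (u ⊗ v) ↦ g(T⁻¹(u) · ? · v)`. -/
def dualConj (B : BialgData k H) (Tinv : H →ₗ[k] H) :
    Module.Dual k H ⊗[k] (H ⊗[k] H) →ₗ[k] Module.Dual k H :=
  (TensorProduct.lift (LinearMap.llcomp k H H k)) ∘ₗ
    (TensorProduct.map LinearMap.id (B.conjLin Tinv))

/-- `a ↦ (a''' ⊗ a') ⊗ a''`. -/
def comul2rot (B : BialgData k H) : H →ₗ[k] (H ⊗[k] H) ⊗[k] H :=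
  (BialgData.rot3 k H H H) ∘ₗ B.comul2

/-- The multiplication of the quantum double `D(H) = H^{*cop} ∞ H`:
`(f ∞ a)(g ∞ b) = Σ f · g(T⁻¹(a''') ? a') ∞ a'' b`. -/
def doubleMul (B : BialgData k H) (Tinv : H →ₗ[k] H) :
    (Module.Dual k H ⊗[k] H) ⊗[k] (Module.Dual k H ⊗[k] H) →ₗ[k]
      Module.Dual k H ⊗[k] H :=
  (TensorProduct.map (B.dualMul) B.mul) ∘ₗ
  (TensorProduct.map ((TensorProduct.comm k (Module.Dual k H) (Module.Dual k H)) :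
      Module.Dual k H ⊗[k] Module.Dual k H →ₗ[k] Module.Dual k H ⊗[k] Module.Dual k H)
    (LinearMap.id : H ⊗[k] H →ₗ[k] H ⊗[k] H)) ∘ₗ
  ((TensorProduct.tensorTensorTensorComm k (Module.Dual k H) H (Module.Dual k H) H) :
    (Module.Dual k H ⊗[k] H) ⊗[k] (Module.Dual k H ⊗[k] H) →ₗ[k]
      (Module.Dual k H ⊗[k] Module.Dual k H) ⊗[k] (H ⊗[k] H)) ∘ₗ
  (TensorProduct.map
    ((TensorProduct.map (B.dualConj Tinv) LinearMap.id) ∘ₗ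
      ((TensorProduct.assoc k (Module.Dual k H) (H ⊗[k] H) H).symm :
        Module.Dual k H ⊗[k] ((H ⊗[k] H) ⊗[k] H) →ₗ[k]
          (Module.Dual k H ⊗[k] (H ⊗[k] H)) ⊗[k] H))
    (LinearMap.id : Module.Dual k H ⊗[k] H →ₗ[k] Module.Dual k H ⊗[k] H)) ∘ₗ
  ((TensorProduct.tensorTensorTensorComm k (Module.Dual k H) (Module.Dual k H)
      ((H ⊗[k] H) ⊗[k] H) H) :
    (Module.Dual k H ⊗[k] Module.Dual k H) ⊗[k] (((H ⊗[k] H) ⊗[k] H) ⊗[k] H) →ₗ[k]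
      (Module.Dual k H ⊗[k] ((H ⊗[k] H) ⊗[k] H)) ⊗[k] (Module.Dual k H ⊗[k] H)) ∘ₗ
  (TensorProduct.map (LinearMap.id : Module.Dual k H ⊗[k] Module.Dual k H →ₗ[k]
      Module.Dual k H ⊗[k] Module.Dual k H)
    (TensorProduct.map B.comul2rot (LinearMap.id : H →ₗ[k] H))) ∘ₗ
  (TensorProduct.map ((TensorProduct.comm k (Module.Dual k H) (Module.Dual k H)) :
      Module.Dual k H ⊗[k] Module.Dual k H →ₗ[k] Module.Dual k H ⊗[k] Module.Dual k H)
    (LinearMap.id : H ⊗[k] H →ₗ[k] H ⊗[k] H)) ∘ₗ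
  ((TensorProduct.tensorTensorTensorComm k (Module.Dual k H) H (Module.Dual k H) H) :
    (Module.Dual k H ⊗[k] H) ⊗[k] (Module.Dual k H ⊗[k] H) →ₗ[k]
      (Module.Dual k H ⊗[k] Module.Dual k H) ⊗[k] (H ⊗[k] H))

/-- The comultiplication of the quantum double `D(H) = H^{*cop} ∞ H`, using the
coproduct of `H^{*cop}` on the first factor. -/
def doubleComul (B : BialgData k H) [FiniteDimensional k H] :
    Module.Dual k H ⊗[k] H →ₗ[k]
      (Module.Dual k H ⊗[k] H) ⊗[k] (Module.Dual k H ⊗[k] H) :=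
  ((TensorProduct.tensorTensorTensorComm k (Module.Dual k H) (Module.Dual k H) H H) :
      (Module.Dual k H ⊗[k] Module.Dual k H) ⊗[k] (H ⊗[k] H) →ₗ[k]
        (Module.Dual k H ⊗[k] H) ⊗[k] (Module.Dual k H ⊗[k] H)) ∘ₗ
    (TensorProduct.map
      (((TensorProduct.comm k (Module.Dual k H) (Module.Dual k H)) :
          Module.Dual k H ⊗[k] Module.Dual k H →ₗ[k]
            Module.Dual k H ⊗[k] Module.Dual k H) ∘ₗ B.dualComul)
      B.comul)

/-- The unit `ε ∞ 1` of the quantum double. -/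
def doubleOne (B : BialgData k H) : Module.Dual k H ⊗[k] H :=
  B.counit ⊗ₜ B.one

/-- Componentwise multiplication on `D(H) ⊗ D(H)`. -/
def doubleMul2 (B : BialgData k H) (Tinv : H →ₗ[k] H) :
    ((Module.Dual k H ⊗[k] H) ⊗[k] (Module.Dual k H ⊗[k] H)) ⊗[k]
        ((Module.Dual k H ⊗[k] H) ⊗[k] (Module.Dual k H ⊗[k] H)) →ₗ[k]
      (Module.Dual k H ⊗[k] H) ⊗[k] (Module.Dual k H ⊗[k] H) :=
  (TensorProduct.map (B.doubleMul Tinv) (B.doubleMul Tinv)) ∘ₗ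
    ((TensorProduct.tensorTensorTensorComm k (Module.Dual k H ⊗[k] H)
        (Module.Dual k H ⊗[k] H) (Module.Dual k H ⊗[k] H) (Module.Dual k H ⊗[k] H)) :
      ((Module.Dual k H ⊗[k] H) ⊗[k] (Module.Dual k H ⊗[k] H)) ⊗[k]
          ((Module.Dual k H ⊗[k] H) ⊗[k] (Module.Dual k H ⊗[k] H)) →ₗ[k]
        ((Module.Dual k H ⊗[k] H) ⊗[k] (Module.Dual k H ⊗[k] H)) ⊗[k]
          ((Module.Dual k H ⊗[k] H) ⊗[k] (Module.Dual k H ⊗[k] H)))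

/-- Componentwise multiplication on `D(H) ⊗ D(H) ⊗ D(H)` (associated to the left). -/
def doubleMul3 (B : BialgData k H) (Tinv : H →ₗ[k] H) :
    (((Module.Dual k H ⊗[k] H) ⊗[k] (Module.Dual k H ⊗[k] H)) ⊗[k]
          (Module.Dual k H ⊗[k] H)) ⊗[k]
        (((Module.Dual k H ⊗[k] H) ⊗[k] (Module.Dual k H ⊗[k] H)) ⊗[k]
          (Module.Dual k H ⊗[k] H)) →ₗ[k]
      ((Module.Dual k H ⊗[k] H) ⊗[k] (Module.Dual k H ⊗[k] H)) ⊗[k]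
        (Module.Dual k H ⊗[k] H) :=
  (TensorProduct.map (B.doubleMul2 Tinv) (B.doubleMul Tinv)) ∘ₗ
    ((TensorProduct.tensorTensorTensorComm k
        ((Module.Dual k H ⊗[k] H) ⊗[k] (Module.Dual k H ⊗[k] H)) (Module.Dual k H ⊗[k] H)
        ((Module.Dual k H ⊗[k] H) ⊗[k] (Module.Dual k H ⊗[k] H)) (Module.Dual k H ⊗[k] H)) :
      (((Module.Dual k H ⊗[k] H) ⊗[k] (Module.Dual k H ⊗[k] H)) ⊗[k]
            (Module.Dual k H ⊗[k] H)) ⊗[k]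
          (((Module.Dual k H ⊗[k] H) ⊗[k] (Module.Dual k H ⊗[k] H)) ⊗[k]
            (Module.Dual k H ⊗[k] H)) →ₗ[k]
        (((Module.Dual k H ⊗[k] H) ⊗[k] (Module.Dual k H ⊗[k] H)) ⊗[k]
            ((Module.Dual k H ⊗[k] H) ⊗[k] (Module.Dual k H ⊗[k] H))) ⊗[k]
          ((Module.Dual k H ⊗[k] H) ⊗[k] (Module.Dual k H ⊗[k] H)))

end BialgData

section Pairing

open BialgData

variable {k : Type} [Field k] {X A : Type}
  [AddCommGroup X] [Module k X] [AddCommGroup A] [Module k A]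

/-- A weak Hopf pair `(X, A)`: a nondegenerate bilinear form `⟨·,·⟩ : X × A → k`
satisfying `⟨x, ab⟩ = Σ ⟨x', a⟩⟨x'', b⟩`, `⟨x, 1⟩ = ε(x)`,
`⟨xy, a⟩ = Σ ⟨x, a'⟩⟨y, a''⟩`, `⟨1, a⟩ = ε(a)` and `⟨S_X x, a⟩ = ⟨x, S_A a⟩`. -/
structure IsWeakHopfPair (BX : BialgData k X) (BA : BialgData k A)
    (SX : X →ₗ[k] X) (SA : A →ₗ[k] A) (p : X →ₗ[k] A →ₗ[k] k) : Prop where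
  nondegen_left : ∀ x : X, (∀ a : A, p x a = 0) → x = 0
  nondegen_right : ∀ a : A, (∀ x : X, p x a = 0) → a = 0
  pair_mul_right : ∀ (x : X) (a b : A),
    p x (BA.mul (a ⊗ₜ b)) =
      (TensorProduct.lid k k) ((TensorProduct.map (p.flip a) (p.flip b)) (BX.comul x))
  pair_one_right : ∀ x : X, p x BA.one = BX.counit x
  pair_mul_left : ∀ (x y : X) (a : A),
    p (BX.mul (x ⊗ₜ y)) a =
      (TensorProduct.lid k k) ((TensorProduct.map (p x) (p y)) (BA.comul a))
  pair_one_left : ∀ a : A, p BX.one a = BA.counit a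
  pair_antipode : ∀ (x : X) (a : A), p (SX x) a = p x (SA a)

/-- A weak Hopf skew-pair `(X, A)` (with `S_A` invertible, with inverse `SAinv`):
as a weak Hopf pair but with `⟨x, ab⟩ = Σ ⟨x'', a⟩⟨x', b⟩` and
`⟨S_X x, a⟩ = ⟨x, S_A⁻¹ a⟩`. -/
structure IsWeakHopfSkewPair (BX : BialgData k X) (BA : BialgData k A)
    (SX : X →ₗ[k] X) (SAinv : A →ₗ[k] A) (p : X →ₗ[k] A →ₗ[k] k) : Prop where
  nondegen_left : ∀ x : X, (∀ a : A, p x a = 0) → x = 0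
  nondegen_right : ∀ a : A, (∀ x : X, p x a = 0) → a = 0
  pair_mul_right : ∀ (x : X) (a b : A),
    p x (BA.mul (a ⊗ₜ b)) =
      (TensorProduct.lid k k) ((TensorProduct.map (p.flip b) (p.flip a)) (BX.comul x))
  pair_one_right : ∀ x : X, p x BA.one = BX.counit x
  pair_mul_left : ∀ (x y : X) (a : A),
    p (BX.mul (x ⊗ₜ y)) a =
      (TensorProduct.lid k k) ((TensorProduct.map (p x) (p y)) (BA.comul a))
  pair_one_left : ∀ a : A, p BX.one a = BA.counit a
  pair_antipode : ∀ (x : X) (a : A), p (SX x) a = p x (SAinv a)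

variable (BX : BialgData k X) (BA : BialgData k A)
  (SX : X →ₗ[k] X) (SAinv : A →ₗ[k] A) (p : X →ₗ[k] A →ₗ[k] k)

/-- Auxiliary map `x ↦ Σ ⟨x' · S_X(x'''), ·⟩ ⊗ x'' ∈ A* ⊗ X`. -/
def lactAux : X →ₗ[k] Module.Dual k A ⊗[k] X :=
  (TensorProduct.map (p ∘ₗ BX.mul ∘ₗ TensorProduct.map LinearMap.id SX) LinearMap.id) ∘ₗ
    (BialgData.swap23 k X X X) ∘ₗ BX.comul2

/-- The left action `a ▷ x = Σ ⟨x' · S_X(x'''), a⟩ x''` of `A` on `X`,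
as a linear map `A ⊗ X → X`. -/
def lact : A ⊗[k] X →ₗ[k] X :=
  ((TensorProduct.lid k X) : k ⊗[k] X →ₗ[k] X) ∘ₗ
    (TensorProduct.map (contractLeft k A) LinearMap.id) ∘ₗ
      (TensorProduct.map ((TensorProduct.comm k A (Module.Dual k A)) :
          A ⊗[k] Module.Dual k A →ₗ[k] Module.Dual k A ⊗[k] A) LinearMap.id) ∘ₗ
        ((TensorProduct.assoc k A (Module.Dual k A) X).symm :
          A ⊗[k] (Module.Dual k A ⊗[k] X) →ₗ[k] (A ⊗[k] Module.Dual k A) ⊗[k] X) ∘ₗ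
          (TensorProduct.map LinearMap.id (lactAux BX SX p))

/-- Auxiliary map `a ↦ Σ ⟨·, S_A⁻¹(a''') · a'⟩ ⊗ a'' ∈ X* ⊗ A`. -/
def ractAux : A →ₗ[k] Module.Dual k X ⊗[k] A :=
  (TensorProduct.map (p.flip ∘ₗ BA.mul ∘ₗ TensorProduct.map SAinv LinearMap.id)
      LinearMap.id) ∘ₗ
    (BialgData.rot3 k A A A) ∘ₗ BA.comul2

/-- The right action `a ◁ x = Σ ⟨x, S_A⁻¹(a''') a'⟩ a''` of `X` on `A`,
as a linear map `A ⊗ X → A`. -/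
def ract : A ⊗[k] X →ₗ[k] A :=
  ((TensorProduct.lid k A) : k ⊗[k] A →ₗ[k] A) ∘ₗ
    (TensorProduct.map (contractLeft k X) LinearMap.id) ∘ₗ
      (BialgData.swap23 k (Module.Dual k X) A X) ∘ₗ
        (TensorProduct.map (ractAux BA SAinv p) LinearMap.id)

end Pairing

namespace BialgData

variable {k : Type} [Field k] {H : Type} [AddCommGroup H] [Module k H] (B : BialgData k H)

@[simp]
theorem op_mul_tmul (a b : H) : B.op.mul (a ⊗ₜ b) = B.mul (b ⊗ₜ a) := rfl

@[simp]
theorem op_comul : B.op.comul = B.comul := rfl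

theorem comm_map_comm_map_of_leftInverse {S T : H →ₗ[k] H} (hTS : Function.LeftInverse T S)
    (u : H ⊗[k] H) :
    TensorProduct.comm k H H (TensorProduct.map T T
      (TensorProduct.comm k H H (TensorProduct.map S S u))) = u := by
  induction u using TensorProduct.induction_on with
  | zero => simp
  | tmul a b => simp [hTS a, hTS b]
  | add a b ha hb => simp only [map_add, ha, hb]

/-- Both sides send `x` to `Σ S(x'') x'`. -/
theorem op_conv_id_eq_conv_id_comp {S T : H →ₗ[k] H}
    (hS : ∀ x, B.comul (S x) = TensorProduct.comm k H H (TensorProduct.map S S (B.comul x)))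
    (hTS : Function.LeftInverse T S) :
    B.op.conv LinearMap.id S = B.conv LinearMap.id T ∘ₗ S := by
  ext x
  simp only [conv, LinearMap.comp_apply, op_comul, hS]
  induction B.comul x using TensorProduct.induction_on with
  | zero => simp
  | tmul a b => simp [hTS a]
  | add a b ha hb => simp only [map_add, ha, hb]

variable {B}

theorem IsAntiBialgebraHom.op_of_inverse {T S : H →ₗ[k] H} (hT : B.IsAntiBialgebraHom T)
    (hST : Function.LeftInverse S T) (hTS : Function.LeftInverse T S) :
    B.op.IsAntiBialgebraHom S := by
  obtain ⟨hT_mul, hT_one, hT_comul, hT_counit⟩ := hT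
  refine ⟨fun x y => ?_, ?_, fun x => ?_, fun x => ?_⟩
  · calc S (B.op.mul (x ⊗ₜ y)) = S (B.mul (T (S y) ⊗ₜ T (S x))) := by rw [hTS, hTS]; rfl
      _ = B.op.mul (S y ⊗ₜ S x) := by rw [← hT_mul, hST]; rfl
  · calc S B.one = S (T B.one) := by rw [hT_one]
      _ = B.op.one := hST _
  · calc B.op.comul (S x)
        = TensorProduct.comm k H H (TensorProduct.map S S
            (TensorProduct.comm k H H (TensorProduct.map T T (B.comul (S x))))) := by
          rw [comm_map_comm_map_of_leftInverse hST]; rfl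
      _ = _ := by rw [← hT_comul, hTS]; rfl
  · show B.counit (S x) = B.counit x
    rw [← hT_counit, hTS]

end BialgData

theorem perfect_iff_op_perfect_general
    {k : Type} [Field k] {H : Type} [AddCommGroup H] [Module k H]
    (B : BialgData k H) (T Tinv : H →ₗ[k] H)
    (hanti : B.IsAntiBialgebraHom T)
    (hinv₁ : Tinv ∘ₗ T = LinearMap.id) (hinv₂ : T ∘ₗ Tinv = LinearMap.id) :
    B.Perfect T ↔ B.op.Perfect Tinv := by
  have hTinv_T : Function.LeftInverse Tinv T := LinearMap.congr_fun hinv₁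
  have hT_Tinv : Function.LeftInverse T Tinv := LinearMap.congr_fun hinv₂
  have hanti_op := hanti.op_of_inverse hTinv_T hT_Tinv
  have hconv := B.op_conv_id_eq_conv_id_comp hanti_op.2.2.1 hT_Tinv
  simp only [BialgData.Perfect, and_iff_right hanti, and_iff_right hanti_op, hconv,
    LinearMap.comp_apply, BialgData.op_mul_tmul]
  rw [hTinv_T.surjective.forall]
  exact forall_congr' fun x => forall_congr' fun y => eq_comm

/-- `H` is perfect with respect to `T` if and only if `H^op` is
perfect with respect to `T⁻¹`. -/
theorem perfect_iff_op_perfect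
    {k : Type} [Field k] {H : Type} [AddCommGroup H] [Module k H]
    (B : BialgData k H) (T Tinv : H →ₗ[k] H)
    (hB : B.IsBialgebra) (hT : B.IsWeakAntipode T)
    (hanti : B.IsAntiBialgebraHom T)
    (hinv₁ : Tinv ∘ₗ T = LinearMap.id) (hinv₂ : T ∘ₗ Tinv = LinearMap.id) :
    B.Perfect T ↔ B.op.Perfect Tinv :=
  perfect_iff_op_perfect_general B T Tinv hanti hinv₁ hinv₂
end
end

section
/- Let H = (H, m, u, Δ, ε, T) be a weak Hopf algebra over a field k whose weak antipode T is an invertible anti-bialgebra morphism, so that H^cop = (H, m, u, Δ^op, ε) is a weak Hopf algebra with weak antipode T^{-1}. Then H is coperfect with respect to T if and only if H^cop is coperfect with respect to T^{-1}. -/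
noncomputable section

open TensorProduct

/-- `H` is coperfect with respect to `T` if and only if `H^cop` is
coperfect with respect to `T⁻¹`. -/
theorem coperfect_iff_cop_coperfect
    {k : Type} [Field k] {H : Type} [AddCommGroup H] [Module k H]
    (B : BialgData k H) (T Tinv : H →ₗ[k] H)
    (hB : B.IsBialgebra) (hT : B.IsWeakAntipode T)
    (hanti : B.IsAntiBialgebraHom T)
    (hinv₁ : Tinv ∘ₗ T = LinearMap.id) (hinv₂ : T ∘ₗ Tinv = LinearMap.id) :
    B.Coperfect T ↔ B.cop.Coperfect Tinv := by
  have hTT : ∀ h : H, T (Tinv h) = h := fun h => by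
    simpa using DFunLike.congr_fun hinv₂ h
  have hTiT : ∀ h : H, Tinv (T h) = h := fun h => by
    simpa using DFunLike.congr_fun hinv₁ h
  have hcc : ∀ w : H ⊗[k] H,
      (TensorProduct.comm k H H) ((TensorProduct.comm k H H) w) = w := fun w => by
    induction w using TensorProduct.induction_on with
    | zero => simp
    | tmul a b => simp
    | add u v hu hv => simp [map_add, hu, hv]
  have hmapTT : ∀ w : H ⊗[k] H,
      TensorProduct.map Tinv Tinv (TensorProduct.map T T w) = w := fun w => by
    induction w using TensorProduct.induction_on with
    | zero => simp
    | tmul a b => simp [hTiT]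
    | add u v hu hv => simp [map_add, hu, hv]
  have hmapTid : ∀ w : H ⊗[k] H,
      TensorProduct.map Tinv LinearMap.id (TensorProduct.map T LinearMap.id w) = w := fun w => by
    induction w using TensorProduct.induction_on with
    | zero => simp
    | tmul a b => simp [hTiT]
    | add u v hu hv => simp [map_add, hu, hv]
  obtain ⟨h1, h2, h3, h4⟩ := hanti
  have hanticop : B.cop.IsAntiBialgebraHom Tinv := by
    refine ⟨fun x y => ?_, ?_, fun x => ?_, fun x => ?_⟩
    · have hinj : Function.Injective T := fun a b h => by
        simpa [hTiT] using congrArg Tinv h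
      apply hinj
      show T (Tinv (B.mul (x ⊗ₜ y))) = T (B.mul (Tinv y ⊗ₜ Tinv x))
      rw [hTT, h1, hTT, hTT]
    · show Tinv B.one = B.one
      calc Tinv B.one = Tinv (T B.one) := by rw [h2]
        _ = B.one := hTiT _
    · show (TensorProduct.comm k H H) (B.comul (Tinv x)) =
        (TensorProduct.comm k H H) ((TensorProduct.map Tinv Tinv)
          ((TensorProduct.comm k H H) (B.comul x)))
      refine congrArg _ ?_
      have h3' := h3 (Tinv x)
      rw [hTT] at h3'
      rw [h3', hcc, hmapTT]
    · show B.counit (Tinv x) = B.counit x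
      rw [← h4 (Tinv x), hTT]
  -- splitting lemmas
  have hsplitL : ∀ (f : H ⊗[k] H →ₗ[k] H) (y : H ⊗[k] H),
      TensorProduct.map (f ∘ₗ B.comul) LinearMap.id y
        = TensorProduct.map f LinearMap.id
            (TensorProduct.map B.comul LinearMap.id y) := by
    intro f y
    induction y using TensorProduct.induction_on with
    | zero => simp
    | tmul a b => simp
    | add u v hu hv => simp [map_add, hu, hv]
  have hsplitR : ∀ (f : H ⊗[k] H →ₗ[k] H) (y : H ⊗[k] H),
      TensorProduct.map LinearMap.id (f ∘ₗ B.comul) y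
        = TensorProduct.map LinearMap.id f
            (TensorProduct.map LinearMap.id B.comul y) := by
    intro f y
    induction y using TensorProduct.induction_on with
    | zero => simp
    | tmul a b => simp
    | add u v hu hv => simp [map_add, hu, hv]
  have hsw1 : ∀ y : H ⊗[k] H,
      TensorProduct.map B.comul LinearMap.id ((TensorProduct.comm k H H) y)
        = (TensorProduct.comm k H (H ⊗[k] H))
            (TensorProduct.map LinearMap.id B.comul y) := by
    intro y
    induction y using TensorProduct.induction_on with
    | zero => simp
    | tmul a b => simp
    | add u v hu hv => simp [map_add, hu, hv]
  have hsw2 : ∀ y : H ⊗[k] H,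
      TensorProduct.map LinearMap.id B.comul ((TensorProduct.comm k H H) y)
        = (TensorProduct.comm k (H ⊗[k] H) H)
            (TensorProduct.map B.comul LinearMap.id y) := by
    intro y
    induction y using TensorProduct.induction_on with
    | zero => simp
    | tmul a b => simp
    | add u v hu hv => simp [map_add, hu, hv]
  have hconv : B.conv LinearMap.id T
      = (B.mul ∘ₗ TensorProduct.map LinearMap.id T) ∘ₗ B.comul := by
    apply LinearMap.ext; intro x
    simp [BialgData.conv]
  have hcopconv : B.cop.conv LinearMap.id Tinv
      = (B.mul ∘ₗ TensorProduct.map LinearMap.id Tinv ∘ₗ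
          (TensorProduct.comm k H H).toLinearMap) ∘ₗ B.comul := by
    apply LinearMap.ext; intro x
    simp [BialgData.conv, BialgData.cop]
  have hcopcomul : ∀ x : H, B.cop.comul x = (TensorProduct.comm k H H) (B.comul x) := by
    intro x; rfl
  -- expressing the four sides through L x = (Δ ⊗ id)(Δ x)
  have eB1 : ∀ x : H,
      TensorProduct.map (B.conv LinearMap.id T) LinearMap.id (B.comul x)
        = TensorProduct.map (B.mul ∘ₗ TensorProduct.map LinearMap.id T) LinearMap.id
            (TensorProduct.map B.comul LinearMap.id (B.comul x)) := by
    intro x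
    rw [hconv, hsplitL]
  have eB2 : ∀ x : H,
      (TensorProduct.comm k H H)
          (TensorProduct.map LinearMap.id (B.conv LinearMap.id T) (B.comul x))
        = (TensorProduct.comm k H H)
            (TensorProduct.map LinearMap.id (B.mul ∘ₗ TensorProduct.map LinearMap.id T)
              ((TensorProduct.assoc k H H H)
                (TensorProduct.map B.comul LinearMap.id (B.comul x)))) := by
    intro x
    rw [hconv, hsplitR, ← hB.coassoc x]
  have eC1 : ∀ x : H,
      TensorProduct.map (B.cop.conv LinearMap.id Tinv) LinearMap.id (B.cop.comul x)
        = TensorProduct.map (B.mul ∘ₗ TensorProduct.map LinearMap.id Tinv ∘ₗ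
              (TensorProduct.comm k H H).toLinearMap) LinearMap.id
            ((TensorProduct.comm k H (H ⊗[k] H))
              ((TensorProduct.assoc k H H H)
                (TensorProduct.map B.comul LinearMap.id (B.comul x)))) := by
    intro x
    rw [hcopconv, hcopcomul, hsplitL, hsw1, ← hB.coassoc x]
  have eC2 : ∀ x : H,
      (TensorProduct.comm k H H)
          (TensorProduct.map LinearMap.id (B.cop.conv LinearMap.id Tinv) (B.cop.comul x))
        = (TensorProduct.comm k H H)
            (TensorProduct.map LinearMap.id (B.mul ∘ₗ TensorProduct.map LinearMap.id Tinv ∘ₗ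
                (TensorProduct.comm k H H).toLinearMap)
              ((TensorProduct.comm k (H ⊗[k] H) H)
                (TensorProduct.map B.comul LinearMap.id (B.comul x)))) := by
    intro x
    rw [hcopconv, hcopcomul, hsplitR, hsw2]
  -- the two cross identities
  have key1 : ∀ z : (H ⊗[k] H) ⊗[k] H,
      TensorProduct.map T LinearMap.id
          (TensorProduct.map (B.mul ∘ₗ TensorProduct.map LinearMap.id Tinv ∘ₗ
                (TensorProduct.comm k H H).toLinearMap) LinearMap.id
            ((TensorProduct.comm k H (H ⊗[k] H)) ((TensorProduct.assoc k H H H) z)))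
        = (TensorProduct.comm k H H)
            (TensorProduct.map LinearMap.id (B.mul ∘ₗ TensorProduct.map LinearMap.id T)
              ((TensorProduct.assoc k H H H) z)) := by
    intro z
    induction z using TensorProduct.induction_on with
    | zero => simp
    | tmul u c =>
      induction u using TensorProduct.induction_on with
      | zero => simp
      | tmul a b => simp [h1, hTT]
      | add u v hu hv => simp only [TensorProduct.add_tmul, map_add, hu, hv]
    | add u v hu hv => simp only [map_add, hu, hv]
  have key2 : ∀ z : (H ⊗[k] H) ⊗[k] H,
      TensorProduct.map T LinearMap.id
          ((TensorProduct.comm k H H)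
            (TensorProduct.map LinearMap.id (B.mul ∘ₗ TensorProduct.map LinearMap.id Tinv ∘ₗ
                (TensorProduct.comm k H H).toLinearMap)
              ((TensorProduct.comm k (H ⊗[k] H) H) z)))
        = TensorProduct.map (B.mul ∘ₗ TensorProduct.map LinearMap.id T) LinearMap.id z := by
    intro z
    induction z using TensorProduct.induction_on with
    | zero => simp
    | tmul u c =>
      induction u using TensorProduct.induction_on with
      | zero => simp
      | tmul a b => simp [h1, hTT]
      | add u v hu hv => simp only [TensorProduct.add_tmul, map_add, hu, hv]
    | add u v hu hv => simp only [map_add, hu, hv]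
  constructor
  · rintro ⟨-, hcond⟩
    refine ⟨hanticop, fun x => ?_⟩
    have h := hcond x
    rw [eB1, eB2] at h
    rw [eC1, eC2]
    have hT1 := key1 (TensorProduct.map B.comul LinearMap.id (B.comul x))
    have hT2 := key2 (TensorProduct.map B.comul LinearMap.id (B.comul x))
    have hmt := hT1.trans (h.symm.trans hT2.symm)
    have hfin := congrArg (TensorProduct.map Tinv LinearMap.id) hmt
    rw [hmapTid, hmapTid] at hfin
    exact hfin
  · rintro ⟨-, hcond⟩
    refine ⟨⟨h1, h2, h3, h4⟩, fun x => ?_⟩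
    have h := hcond x
    rw [eC1, eC2] at h
    rw [eB1, eB2]
    have hT1 := key1 (TensorProduct.map B.comul LinearMap.id (B.comul x))
    have hT2 := key2 (TensorProduct.map B.comul LinearMap.id (B.comul x))
    rw [← hT2, ← h, hT1]
end
end

section
/- Let H be a finite-dimensional weak Hopf algebra over a field k with weak antipode T. Then H is perfect if and only if its dual weak Hopf algebra H* (with weak antipode T*) is coperfect. -/
noncomputable section

open TensorProduct

/-!
Every clause of perfectness of `H` is the transpose of the corresponding clause of
coperfectness of `H*` under the evaluation pairings `H* × H → k` and
`(H* ⊗ H*) × (H ⊗ H) → k`: multiplication and comultiplication trade places, as do unit and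
counit, and `id ∗ T*` is the transpose of `P = id ∗ T`. Pairing the coperfectness identity
for `f ∈ H*` with `x ⊗ y` gives `f (P x * y) = f (y * P x)`. In finite dimension both pairings
are nondegenerate, so each clause is equivalent to its transpose.
-/

theorem Module.forall_dual_apply_eq_iff (R : Type*) {V : Type*} [CommSemiring R]
    [AddCommMonoid V] [Module R V] [Module.Projective R V] {u v : V} :
    (∀ φ : Module.Dual R V, φ u = φ v) ↔ u = v :=
  ⟨fun h => Module.eval_apply_injective R (LinearMap.ext h), fun h _ => h ▸ rfl⟩

namespace TensorProduct

variable {R M N M' N' : Type*} [CommSemiring R]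
  [AddCommMonoid M] [AddCommMonoid N] [AddCommMonoid M'] [AddCommMonoid N']
  [Module R M] [Module R N] [Module R M'] [Module R N']

theorem dualDistrib_map_dualMap (σ : M →ₗ[R] M') (τ : N →ₗ[R] N')
    (t : Module.Dual R M' ⊗[R] Module.Dual R N') (u : M ⊗[R] N) :
    dualDistrib R M N (map σ.dualMap τ.dualMap t) u = dualDistrib R M' N' t (map σ τ u) := by
  induction t with
  | zero => simp
  | tmul f g =>
    induction u with
    | zero => simp
    | tmul m n => rfl
    | add u v hu hv => simp only [map_add, hu, hv]
  | add s t hs ht => simp only [map_add, LinearMap.add_apply, hs, ht]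

variable [Module.Free R M] [Module.Free R N] [Module.Finite R M] [Module.Finite R N]

theorem forall_dualDistrib_tmul_apply_eq_iff {u v : M ⊗[R] N} :
    (∀ (f : Module.Dual R M) (g : Module.Dual R N),
      dualDistrib R M N (f ⊗ₜ g) u = dualDistrib R M N (f ⊗ₜ g) v) ↔ u = v := by
  refine ⟨fun h => (Module.forall_dual_apply_eq_iff R).mp fun φ => ?_, fun h _ _ => h ▸ rfl⟩
  obtain ⟨t, rfl⟩ := (dualDistribEquiv R M N).surjective φ
  induction t with
  | zero => simp
  | tmul f g => exact h f g
  | add s t hs ht => simp only [map_add, LinearMap.add_apply, hs, ht]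

theorem eq_iff_forall_dualDistrib_apply_tmul {s t : Module.Dual R M ⊗[R] Module.Dual R N} :
    s = t ↔ ∀ m n, dualDistrib R M N s (m ⊗ₜ n) = dualDistrib R M N t (m ⊗ₜ n) :=
  ⟨fun h _ _ => h ▸ rfl, fun h => (dualDistribEquiv R M N).injective (ext' h)⟩

end TensorProduct

namespace BialgData

variable {k : Type} [Field k] {H : Type} [AddCommGroup H] [Module k H] [FiniteDimensional k H]
  (B : BialgData k H) (T : H →ₗ[k] H)

theorem dual_mul_apply (t : Module.Dual k H ⊗[k] Module.Dual k H) (x : H) :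
    B.dual.mul t x = dualDistrib k H H t (B.comul x) := rfl

theorem dualDistrib_dual_comul (f : Module.Dual k H) :
    dualDistrib k H H (B.dual.comul f) = B.mul.dualMap f :=
  (dualDistribEquiv k H H).apply_symm_apply _

theorem dual_conv_dualMap (σ τ : H →ₗ[k] H) :
    B.dual.conv σ.dualMap τ.dualMap = (B.conv σ τ).dualMap := by
  ext f x
  change dualDistrib k H H (map σ.dualMap τ.dualMap (B.dual.comul f)) (B.comul x) = _
  rw [dualDistrib_map_dualMap, dualDistrib_dual_comul]
  rfl

theorem dual_conv_id_dualMap :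
    B.dual.conv LinearMap.id T.dualMap = (B.conv LinearMap.id T).dualMap := by
  rw [← LinearMap.dualMap_id, dual_conv_dualMap]

theorem dualMap_dual_mul_iff :
    (∀ f g, T.dualMap (B.dual.mul (f ⊗ₜ g)) = B.dual.mul (T.dualMap g ⊗ₜ T.dualMap f)) ↔
      ∀ x, B.comul (T x) = TensorProduct.comm k H H (map T T (B.comul x)) := by
  have rhs : ∀ f g x, B.dual.mul (T.dualMap g ⊗ₜ T.dualMap f) x =
      dualDistrib k H H (f ⊗ₜ g) (TensorProduct.comm k H H (map T T (B.comul x))) := by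
    intro f g x
    rw [dual_mul_apply, ← map_tmul, dualDistrib_map_dualMap, dualDistrib_apply_comm, comm_tmul]
  simp only [LinearMap.ext_iff, rhs, ← forall_dualDistrib_tmul_apply_eq_iff]
  exact ⟨fun h x f g => h f g x, fun h f g x => h x f g⟩

theorem dualMap_dual_one_iff :
    T.dualMap B.dual.one = B.dual.one ↔ ∀ x, B.counit (T x) = B.counit x :=
  LinearMap.ext_iff

theorem dual_comul_dualMap_iff :
    (∀ f, B.dual.comul (T.dualMap f) =
        TensorProduct.comm k _ _ (map T.dualMap T.dualMap (B.dual.comul f))) ↔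
      ∀ x y, T (B.mul (x ⊗ₜ y)) = B.mul (T y ⊗ₜ T x) := by
  have lhs : ∀ f x y, dualDistrib k H H (B.dual.comul (T.dualMap f)) (x ⊗ₜ y) =
      f (T (B.mul (x ⊗ₜ y))) := by
    intro f x y
    rw [dualDistrib_dual_comul]
    rfl
  have rhs : ∀ f x y, dualDistrib k H H
      (TensorProduct.comm k _ _ (map T.dualMap T.dualMap (B.dual.comul f))) (x ⊗ₜ y) =
        f (B.mul (T y ⊗ₜ T x)) := by
    intro f x y
    rw [← dualDistrib_apply_comm, comm_tmul, dualDistrib_map_dualMap, map_tmul,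
      dualDistrib_dual_comul]
    rfl
  simp only [eq_iff_forall_dualDistrib_apply_tmul, lhs, rhs]
  exact ⟨fun h x y => (Module.forall_dual_apply_eq_iff k).mp fun f => h f x y,
    fun h f x y => by rw [h]⟩

theorem dual_counit_dualMap_iff :
    (∀ f, B.dual.counit (T.dualMap f) = B.dual.counit f) ↔ T B.one = B.one :=
  Module.forall_dual_apply_eq_iff k

theorem isAntiBialgebraHom_dual_iff :
    B.dual.IsAntiBialgebraHom T.dualMap ↔ B.IsAntiBialgebraHom T := by
  rw [IsAntiBialgebraHom, IsAntiBialgebraHom, dualMap_dual_mul_iff, dualMap_dual_one_iff,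
    dual_comul_dualMap_iff, dual_counit_dualMap_iff]
  tauto

theorem dual_coperfect_condition_iff_commute (P : H →ₗ[k] H) :
    (∀ f, map P.dualMap LinearMap.id (B.dual.comul f) =
        TensorProduct.comm k _ _ (map LinearMap.id P.dualMap (B.dual.comul f))) ↔
      ∀ x y, B.mul (P x ⊗ₜ y) = B.mul (y ⊗ₜ P x) := by
  have lhs : ∀ f x y, dualDistrib k H H (map P.dualMap LinearMap.id (B.dual.comul f)) (x ⊗ₜ y) =
      f (B.mul (P x ⊗ₜ y)) := by
    intro f x y
    rw [← LinearMap.dualMap_id, dualDistrib_map_dualMap, map_tmul, dualDistrib_dual_comul]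
    rfl
  have rhs : ∀ f x y, dualDistrib k H H
      (TensorProduct.comm k _ _ (map LinearMap.id P.dualMap (B.dual.comul f))) (x ⊗ₜ y) =
        f (B.mul (y ⊗ₜ P x)) := by
    intro f x y
    rw [← dualDistrib_apply_comm, comm_tmul, ← LinearMap.dualMap_id, dualDistrib_map_dualMap,
      map_tmul, dualDistrib_dual_comul]
    rfl
  simp only [eq_iff_forall_dualDistrib_apply_tmul, lhs, rhs]
  exact ⟨fun h x y => (Module.forall_dual_apply_eq_iff k).mp fun f => h f x y,
    fun h f x y => by rw [h]⟩

end BialgData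

theorem perfect_iff_dual_coperfect_general
    {k : Type} [Field k] {H : Type} [AddCommGroup H] [Module k H]
    [FiniteDimensional k H]
    (B : BialgData k H) (T : H →ₗ[k] H) :
    B.Perfect T ↔ B.dual.Coperfect T.dualMap := by
  rw [BialgData.Perfect, BialgData.Coperfect, B.dual_conv_id_dualMap,
    B.dual_coperfect_condition_iff_commute, B.isAntiBialgebraHom_dual_iff]

/-- a finite-dimensional weak Hopf algebra `H` is perfect if and only
if its dual `H*` (with weak antipode `T*`) is coperfect. -/
theorem perfect_iff_dual_coperfect
    {k : Type} [Field k] {H : Type} [AddCommGroup H] [Module k H]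
    [FiniteDimensional k H]
    (B : BialgData k H) (T : H →ₗ[k] H)
    (hB : B.IsBialgebra) (hT : B.IsWeakAntipode T) :
    B.Perfect T ↔ B.dual.Coperfect T.dualMap :=
  perfect_iff_dual_coperfect_general B T
end
end

section
/- Let H be a finite-dimensional weak Hopf algebra over a field k with weak antipode T. Then H is coperfect if and only if its dual weak Hopf algebra H* (with weak antipode T*) is perfect. -/
noncomputable section

open TensorProduct

section AuxDD
open Module

variable {k : Type} [Field k] {H : Type} [AddCommGroup H] [Module k H]

private lemma ddA' (u v : H →ₗ[k] H) (f g : Module.Dual k H) (z : H ⊗[k] H) :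
    TensorProduct.dualDistrib k H H (u.dualMap f ⊗ₜ v.dualMap g) z
      = TensorProduct.dualDistrib k H H (f ⊗ₜ g) (TensorProduct.map u v z) := by
  induction z using TensorProduct.induction_on with
  | zero => simp
  | tmul x y => simp
  | add a b ha hb => simp [ha, hb]

private lemma ddA (u v : H →ₗ[k] H) (φ : Module.Dual k H ⊗[k] Module.Dual k H)
    (z : H ⊗[k] H) :
    TensorProduct.dualDistrib k H H (TensorProduct.map u.dualMap v.dualMap φ) z
      = TensorProduct.dualDistrib k H H φ (TensorProduct.map u v z) := by
  induction φ using TensorProduct.induction_on with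
  | zero => simp
  | tmul f g => simpa using ddA' u v f g z
  | add a b ha hb => simp [map_add, ha, hb]

private lemma ddC' (f g : Module.Dual k H) (z : H ⊗[k] H) :
    TensorProduct.dualDistrib k H H (f ⊗ₜ g) ((TensorProduct.comm k H H) z)
      = TensorProduct.dualDistrib k H H (g ⊗ₜ[k] f) z := by
  induction z using TensorProduct.induction_on with
  | zero => simp
  | tmul x y => simp [mul_comm]
  | add a b ha hb => simp [ha, hb]

private lemma ddC (φ : Module.Dual k H ⊗[k] Module.Dual k H) (z : H ⊗[k] H) :
    TensorProduct.dualDistrib k H H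
        ((TensorProduct.comm k (Module.Dual k H) (Module.Dual k H)) φ) z
      = TensorProduct.dualDistrib k H H φ ((TensorProduct.comm k H H) z) := by
  induction φ using TensorProduct.induction_on with
  | zero => simp
  | tmul f g => simpa using (ddC' f g z).symm
  | add a b ha hb => simp [map_add, ha, hb]

variable [FiniteDimensional k H]

private lemma hDDequiv (φ : Module.Dual k H ⊗[k] Module.Dual k H) :
    (TensorProduct.dualDistribEquiv k H H) φ = TensorProduct.dualDistrib k H H φ := rfl

private lemma sepH (x y : H) (h : ∀ f : Module.Dual k H, f x = f y) : x = y := by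
  rw [← sub_eq_zero, ← Module.forall_dual_apply_eq_zero_iff k (x - y)]
  intro f; simp [h f]

private lemma sepHH (w w' : H ⊗[k] H)
    (h : ∀ f g : Module.Dual k H,
      TensorProduct.dualDistrib k H H (f ⊗ₜ g) w
        = TensorProduct.dualDistrib k H H (f ⊗ₜ g) w') :
    w = w' := by
  rw [← sub_eq_zero, ← Module.forall_dual_apply_eq_zero_iff k (w - w')]
  intro ψ
  obtain ⟨φ, rfl⟩ := (TensorProduct.dualDistribEquiv k H H).surjective ψ
  rw [hDDequiv]
  induction φ using TensorProduct.induction_on with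
  | zero => simp
  | tmul f g => simp [h f g]
  | add a b ha hb => simp [map_add, ha, hb]

private lemma sepDD (φ φ' : Module.Dual k H ⊗[k] Module.Dual k H)
    (h : ∀ x y : H, TensorProduct.dualDistrib k H H φ (x ⊗ₜ y)
      = TensorProduct.dualDistrib k H H φ' (x ⊗ₜ y)) :
    φ = φ' := by
  apply (TensorProduct.dualDistribEquiv k H H).injective
  rw [hDDequiv, hDDequiv]
  exact TensorProduct.ext' h

private lemma dualMul_eval (B : BialgData k H) (ψ : Module.Dual k H ⊗[k] Module.Dual k H)
    (x : H) : B.dual.mul ψ x = TensorProduct.dualDistrib k H H ψ (B.comul x) := rfl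

private lemma dualComul_eval (B : BialgData k H) (f : Module.Dual k H) (z : H ⊗[k] H) :
    TensorProduct.dualDistrib k H H (B.dual.comul f) z = f (B.mul z) := by
  have h : TensorProduct.dualDistrib k H H (B.dual.comul f) = B.mul.dualMap f := by
    rw [← hDDequiv]
    exact (TensorProduct.dualDistribEquiv k H H).apply_symm_apply (B.mul.dualMap f)
  rw [h]; rfl

private lemma convD (B : BialgData k H) (T : H →ₗ[k] H) (f : Module.Dual k H) :
    B.dual.conv LinearMap.id T.dualMap f = (B.conv LinearMap.id T).dualMap f := by
  apply LinearMap.ext; intro x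
  show B.dual.mul (TensorProduct.map LinearMap.id T.dualMap (B.dual.comul f)) x
    = f (B.conv LinearMap.id T x)
  rw [dualMul_eval, show (LinearMap.id : Module.Dual k H →ₗ[k] Module.Dual k H)
      = (LinearMap.id : H →ₗ[k] H).dualMap from (LinearMap.dualMap_id).symm,
    ddA, dualComul_eval]
  rfl

end AuxDD

/-- a finite-dimensional weak Hopf algebra `H` is coperfect if and
only if its dual `H*` (with weak antipode `T*`) is perfect. -/
theorem coperfect_iff_dual_perfect
    {k : Type} [Field k] {H : Type} [AddCommGroup H] [Module k H]
    [FiniteDimensional k H]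
    (B : BialgData k H) (T : H →ₗ[k] H)
    (hB : B.IsBialgebra) (hT : B.IsWeakAntipode T) :
    B.Coperfect T ↔ B.dual.Perfect T.dualMap := by
  constructor
  · rintro ⟨⟨h1, h2, h3, h4⟩, hc⟩
    refine ⟨⟨fun f g => ?_, ?_, fun f => ?_, fun f => ?_⟩, fun f g => ?_⟩
    · apply LinearMap.ext; intro x
      show B.dual.mul (f ⊗ₜ g) (T x) = B.dual.mul (T.dualMap g ⊗ₜ T.dualMap f) x
      rw [dualMul_eval, dualMul_eval, h3 x, ddC', ← ddA']
    · apply LinearMap.ext; intro x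
      exact h4 x
    · apply sepDD; intro x y
      rw [dualComul_eval, ddC, ddA, dualComul_eval]
      simp only [TensorProduct.comm_tmul, TensorProduct.map_tmul,
        LinearMap.dualMap_apply]
      exact congrArg f (h1 x y)
    · show f (T B.one) = f B.one
      rw [h2]
    · apply LinearMap.ext; intro x
      rw [convD, dualMul_eval, dualMul_eval,
        show g = (LinearMap.id : H →ₗ[k] H).dualMap g from rfl, ddA', ddA', hc x, ddC']
  · rintro ⟨⟨h1, h2, h3, h4⟩, hc⟩
    refine ⟨⟨fun x y => ?_, ?_, fun x => ?_, fun x => ?_⟩, fun x => ?_⟩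
    · apply sepH (k := k); intro f
      have h : TensorProduct.dualDistrib k H H (B.dual.comul (T.dualMap f)) (x ⊗ₜ y)
          = TensorProduct.dualDistrib k H H
              ((TensorProduct.comm k (Module.Dual k H) (Module.Dual k H))
                ((TensorProduct.map T.dualMap T.dualMap) (B.dual.comul f))) (x ⊗ₜ y) := by
        rw [h3 f]
      rw [dualComul_eval, ddC, ddA, dualComul_eval] at h
      simp only [TensorProduct.comm_tmul, TensorProduct.map_tmul,
        LinearMap.dualMap_apply] at h
      exact h
    · apply sepH (k := k); intro f
      exact h4 f
    · apply sepHH; intro f g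
      have h : T.dualMap (B.dual.mul (f ⊗ₜ g)) x
          = B.dual.mul (T.dualMap g ⊗ₜ T.dualMap f) x := by rw [h1 f g]
      rw [LinearMap.dualMap_apply, dualMul_eval, dualMul_eval, ddA'] at h
      rw [ddC']
      exact h
    · exact congrArg (fun ψ : Module.Dual k H => ψ x) h2
    · apply sepHH; intro f g
      have h : B.dual.mul ((B.dual.conv LinearMap.id T.dualMap) f ⊗ₜ g) x
          = B.dual.mul (g ⊗ₜ (B.dual.conv LinearMap.id T.dualMap) f) x := by
        rw [hc f g]
      rw [convD, dualMul_eval, dualMul_eval,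
        show g = (LinearMap.id : H →ₗ[k] H).dualMap g from rfl, ddA', ddA'] at h
      rw [ddC']
      exact h
end
end

section
/- Let H be a finite-dimensional weak Hopf algebra over a field k with weak antipode T. Then H is biperfect if and only if its dual weak Hopf algebra H* (with weak antipode T*) is biperfect. -/
noncomputable section

open TensorProduct

namespace BiperfectAux

open BialgData

variable {k : Type} [Field k] {H : Type} [AddCommGroup H] [Module k H]

local notation "D" => Module.Dual k H
local notation "Phi" => TensorProduct.dualDistrib k H H

lemma sep1 {V : Type} [AddCommGroup V] [Module k V] {u v : V}
    (h : ∀ f : Module.Dual k V, f u = f v) : u = v := by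
  rw [← sub_eq_zero, ← Module.forall_dual_apply_eq_zero_iff k (u - v)]
  intro f; simp [h f]

variable [FiniteDimensional k H]

lemma dd_inj : Function.Injective ⇑(TensorProduct.dualDistrib k H H) :=
  (TensorProduct.dualDistribEquiv k H H).injective

lemma sep2 {u v : H ⊗[k] H}
    (h : ∀ f g : D, Phi (f ⊗ₜ g) u = Phi (f ⊗ₜ g) v) : u = v := by
  have h' : ∀ t : D ⊗[k] D, Phi t u = Phi t v := by
    intro t
    induction t using TensorProduct.induction_on with
    | zero => simp
    | tmul f g => exact h f g
    | add a b ha hb => simp [ha, hb]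
  refine sep1 (k := k) fun F => ?_
  obtain ⟨t, rfl⟩ : ∃ t, Phi t = F :=
    ⟨(TensorProduct.dualDistribEquiv k H H).symm F,
      (TensorProduct.dualDistribEquiv k H H).apply_symm_apply F⟩
  exact h' t

lemma E_map (A C : H →ₗ[k] H) (t : D ⊗[k] D) :
    Phi (TensorProduct.map A.dualMap C.dualMap t)
      = (Phi t) ∘ₗ (TensorProduct.map A C) := by
  induction t using TensorProduct.induction_on with
  | zero => simp
  | tmul f g => exact TensorProduct.ext' fun x y => by simp
  | add a b ha hb =>
    refine TensorProduct.ext' fun x y => ?_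
    simp only [map_add, LinearMap.add_apply, ha, hb, LinearMap.coe_comp, Function.comp_apply]

lemma E_comm (t : D ⊗[k] D) :
    Phi ((TensorProduct.comm k D D) t)
      = (Phi t) ∘ₗ (TensorProduct.comm k H H).toLinearMap := by
  induction t using TensorProduct.induction_on with
  | zero => simp
  | tmul f g => exact TensorProduct.ext' fun x y => by simp [mul_comm]
  | add a b ha hb =>
    refine TensorProduct.ext' fun x y => ?_
    simp only [map_add, LinearMap.add_apply, ha, hb, LinearMap.coe_comp, Function.comp_apply]

variable (B : BialgData k H) (T : H →ₗ[k] H)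

lemma dual_mul_apply (t : D ⊗[k] D) (x : H) : B.dual.mul t x = Phi t (B.comul x) := rfl

lemma dual_comul_eq (f : D) : Phi (B.dual.comul f) = f ∘ₗ B.mul := by
  have h : Phi (B.dual.comul f) = B.mul.dualMap f :=
    (TensorProduct.dualDistribEquiv k H H).apply_symm_apply _
  rw [h]; rfl

lemma phi_tmul (f g : D) (x y : H) : Phi (f ⊗ₜ g) (x ⊗ₜ y) = f x * g y := by
  simp [mul_comm]

lemma chainA (f g : D) :
    Phi (T.dualMap g ⊗ₜ[k] T.dualMap f)
      = Phi (f ⊗ₜ g) ∘ₗ (TensorProduct.comm k H H).toLinearMap ∘ₗ TensorProduct.map T T :=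
  TensorProduct.ext' fun a b => by simp [mul_comm]

lemma chainB (c : H →ₗ[k] H) (f g : D) :
    Phi (c.dualMap f ⊗ₜ[k] g) = Phi (f ⊗ₜ g) ∘ₗ TensorProduct.map c LinearMap.id :=
  TensorProduct.ext' fun a b => by simp

lemma chainC (c : H →ₗ[k] H) (f g : D) :
    Phi (g ⊗ₜ[k] c.dualMap f)
      = Phi (f ⊗ₜ g) ∘ₗ (TensorProduct.comm k H H).toLinearMap ∘ₗ
          TensorProduct.map LinearMap.id c :=
  TensorProduct.ext' fun a b => by simp [mul_comm]

lemma dual_conv_apply (f : D) (x : H) :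
    (B.dual.conv LinearMap.id T.dualMap) f x = f ((B.conv LinearMap.id T) x) := by
  show B.dual.mul ((TensorProduct.map LinearMap.id T.dualMap) (B.dual.comul f)) x = _
  rw [dual_mul_apply,
    show (TensorProduct.map (LinearMap.id : D →ₗ[k] D) T.dualMap)
      = TensorProduct.map (LinearMap.id : H →ₗ[k] H).dualMap T.dualMap by
      rw [LinearMap.dualMap_id],
    E_map, dual_comul_eq]
  rfl

lemma dual_conv_eq :
    B.dual.conv LinearMap.id T.dualMap = (B.conv LinearMap.id T).dualMap :=
  LinearMap.ext fun f => LinearMap.ext fun x => by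
    rw [dual_conv_apply]; rfl

-- (A1 in dual) ↔ (A3 in H)
lemma iff13 :
    (∀ x : H, B.comul (T x)
        = (TensorProduct.comm k H H) ((TensorProduct.map T T) (B.comul x))) ↔
    (∀ f g : D, T.dualMap (B.dual.mul (f ⊗ₜ g))
        = B.dual.mul (T.dualMap g ⊗ₜ T.dualMap f)) := by
  have key1 : ∀ (f g : D) (x : H),
      T.dualMap (B.dual.mul (f ⊗ₜ[k] g)) x = Phi (f ⊗ₜ g) (B.comul (T x)) := by
    intro f g x
    rw [LinearMap.dualMap_apply, dual_mul_apply]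
  have key2 : ∀ (f g : D) (x : H),
      B.dual.mul (T.dualMap g ⊗ₜ[k] T.dualMap f) x
        = Phi (f ⊗ₜ g)
            ((TensorProduct.comm k H H) ((TensorProduct.map T T) (B.comul x))) := by
    intro f g x
    rw [dual_mul_apply, chainA]
    simp
  constructor
  · intro h f g
    refine LinearMap.ext fun x => ?_
    rw [key1, key2, h]
  · intro h x
    refine sep2 fun f g => ?_
    rw [← key1, ← key2, h]

-- (A3 in dual) ↔ (A1 in H)
lemma iff31 :
    (∀ x y : H, T (B.mul (x ⊗ₜ y)) = B.mul (T y ⊗ₜ T x)) ↔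
    (∀ f : D, B.dual.comul (T.dualMap f)
        = (TensorProduct.comm k D D)
            ((TensorProduct.map T.dualMap T.dualMap) (B.dual.comul f))) := by
  have key1 : ∀ (f : D) (x y : H),
      Phi (B.dual.comul (T.dualMap f)) (x ⊗ₜ y) = f (T (B.mul (x ⊗ₜ y))) := by
    intro f x y
    rw [dual_comul_eq]
    rfl
  have key2 : ∀ (f : D) (x y : H),
      Phi ((TensorProduct.comm k D D)
          ((TensorProduct.map T.dualMap T.dualMap) (B.dual.comul f))) (x ⊗ₜ y)
        = f (B.mul (T y ⊗ₜ T x)) := by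
    intro f x y
    rw [E_comm, E_map, dual_comul_eq]
    simp
  constructor
  · intro h f
    refine dd_inj (TensorProduct.ext' fun x y => ?_)
    rw [key1, key2, h]
  · intro h x y
    refine sep1 (k := k) fun f => ?_
    rw [← key1, ← key2, h]

-- (A2 in dual) ↔ (A4 in H)
lemma iff42 :
    (∀ x : H, B.counit (T x) = B.counit x) ↔
    (T.dualMap B.dual.one = B.dual.one) := by
  constructor
  · intro h
    exact LinearMap.ext fun x => h x
  · intro h x
    exact congrFun (congrArg (fun φ : D => ⇑φ) h) x

-- (A4 in dual) ↔ (A2 in H)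
lemma iff24 :
    (T B.one = B.one) ↔
    (∀ f : D, B.dual.counit (T.dualMap f) = B.dual.counit f) := by
  have key : ∀ f : D, B.dual.counit (T.dualMap f) = f (T B.one) := fun f => rfl
  have key2 : ∀ f : D, B.dual.counit f = f B.one := fun f => rfl
  constructor
  · intro h f
    rw [key, key2, h]
  · intro h
    refine sep1 (k := k) fun f => ?_
    rw [← key, ← key2, h f]

-- (central in dual) ↔ (coperfect condition in H)
lemma iffC1 :
    (∀ x : H,
      (TensorProduct.map (B.conv LinearMap.id T) LinearMap.id) (B.comul x)
        = (TensorProduct.comm k H H)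
            ((TensorProduct.map LinearMap.id (B.conv LinearMap.id T)) (B.comul x))) ↔
    (∀ f g : D,
      B.dual.mul ((B.dual.conv LinearMap.id T.dualMap) f ⊗ₜ g)
        = B.dual.mul (g ⊗ₜ (B.dual.conv LinearMap.id T.dualMap) f)) := by
  have key1 : ∀ (f g : D) (x : H),
      B.dual.mul ((B.dual.conv LinearMap.id T.dualMap) f ⊗ₜ[k] g) x
        = Phi (f ⊗ₜ g)
            ((TensorProduct.map (B.conv LinearMap.id T) LinearMap.id) (B.comul x)) := by
    intro f g x
    rw [dual_conv_eq, dual_mul_apply, chainB]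
    rfl
  have key2 : ∀ (f g : D) (x : H),
      B.dual.mul (g ⊗ₜ[k] (B.dual.conv LinearMap.id T.dualMap) f) x
        = Phi (f ⊗ₜ g)
            ((TensorProduct.comm k H H)
              ((TensorProduct.map LinearMap.id (B.conv LinearMap.id T)) (B.comul x))) := by
    intro f g x
    rw [dual_conv_eq, dual_mul_apply, chainC]
    simp
  constructor
  · intro h f g
    refine LinearMap.ext fun x => ?_
    rw [key1, key2, h]
  · intro h x
    refine sep2 fun f g => ?_
    rw [← key1, ← key2, h]

-- (coperfect condition in dual) ↔ (central in H)
lemma iffC2 :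
    (∀ x y : H,
      B.mul ((B.conv LinearMap.id T) x ⊗ₜ y) = B.mul (y ⊗ₜ (B.conv LinearMap.id T) x)) ↔
    (∀ f : D,
      (TensorProduct.map (B.dual.conv LinearMap.id T.dualMap) LinearMap.id)
          (B.dual.comul f)
        = (TensorProduct.comm k D D)
            ((TensorProduct.map LinearMap.id (B.dual.conv LinearMap.id T.dualMap))
              (B.dual.comul f))) := by
  have key1 : ∀ (f : D) (x y : H),
      Phi ((TensorProduct.map (B.dual.conv LinearMap.id T.dualMap) LinearMap.id)
          (B.dual.comul f)) (x ⊗ₜ y)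
        = f (B.mul ((B.conv LinearMap.id T) x ⊗ₜ y)) := by
    intro f x y
    rw [dual_conv_eq,
      show (TensorProduct.map (B.conv LinearMap.id T).dualMap
          (LinearMap.id : D →ₗ[k] D))
        = TensorProduct.map (B.conv LinearMap.id T).dualMap
            (LinearMap.id : H →ₗ[k] H).dualMap by rw [LinearMap.dualMap_id],
      E_map, dual_comul_eq]
    simp
  have key2 : ∀ (f : D) (x y : H),
      Phi ((TensorProduct.comm k D D)
          ((TensorProduct.map LinearMap.id (B.dual.conv LinearMap.id T.dualMap))
            (B.dual.comul f))) (x ⊗ₜ y)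
        = f (B.mul (y ⊗ₜ (B.conv LinearMap.id T) x)) := by
    intro f x y
    rw [dual_conv_eq, E_comm,
      show (TensorProduct.map (LinearMap.id : D →ₗ[k] D)
          (B.conv LinearMap.id T).dualMap)
        = TensorProduct.map (LinearMap.id : H →ₗ[k] H).dualMap
            (B.conv LinearMap.id T).dualMap by rw [LinearMap.dualMap_id],
      E_map, dual_comul_eq]
    simp
  constructor
  · intro h f
    refine dd_inj (TensorProduct.ext' fun x y => ?_)
    rw [key1, key2, h]
  · intro h x y
    refine sep1 (k := k) fun f => ?_
    rw [← key1, ← key2, h]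

end BiperfectAux

/-- a finite-dimensional weak Hopf algebra `H` is biperfect if and
only if its dual `H*` (with weak antipode `T*`) is biperfect. -/
theorem biperfect_iff_dual_biperfect
    {k : Type} [Field k] {H : Type} [AddCommGroup H] [Module k H]
    [FiniteDimensional k H]
    (B : BialgData k H) (T : H →ₗ[k] H)
    (hB : B.IsBialgebra) (hT : B.IsWeakAntipode T) :
    B.Biperfect T ↔ B.dual.Biperfect T.dualMap := by
  open BiperfectAux in
  constructor
  · rintro ⟨⟨⟨h1, h2, h3, h4⟩, h5⟩, ⟨-, h6⟩⟩
    exact ⟨⟨⟨(iff13 B T).mp h3, (iff42 B T).mp h4, (iff31 B T).mp h1,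
        (iff24 B T).mp h2⟩, (iffC1 B T).mp h6⟩,
      ⟨⟨(iff13 B T).mp h3, (iff42 B T).mp h4, (iff31 B T).mp h1,
        (iff24 B T).mp h2⟩, (iffC2 B T).mp h5⟩⟩
  · rintro ⟨⟨⟨d1, d2, d3, d4⟩, d5⟩, ⟨-, d6⟩⟩
    exact ⟨⟨⟨(iff31 B T).mpr d3, (iff24 B T).mpr d4, (iff13 B T).mpr d1,
        (iff42 B T).mpr d2⟩, (iffC2 B T).mpr d6⟩,
      ⟨⟨(iff31 B T).mpr d3, (iff24 B T).mpr d4, (iff13 B T).mpr d1,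
        (iff42 B T).mpr d2⟩, (iffC1 B T).mpr d5⟩⟩
end
end

section
/- Let H be a finite-dimensional weak Hopf algebra over a field k whose weak antipode T is an invertible anti-bialgebra morphism. Then H is perfect, i.e. (id ∗ T)(H) ⊆ C(H), if and only if (T ∗ id)(H) ⊆ C(H), i.e. Σ T(x')x'' is central in H for every x ∈ H. -/
noncomputable section

open TensorProduct

/-- for a finite-dimensional weak Hopf algebra `H` whose weak
antipode `T` is an invertible anti-bialgebra morphism, `H` is perfect
(`(id ∗ T)(H) ⊆ C(H)`) if and only if `(T ∗ id)(H) ⊆ C(H)`. -/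
theorem perfect_iff_conv_antipode_id_central
    {k : Type} [Field k] {H : Type} [AddCommGroup H] [Module k H]
    [FiniteDimensional k H]
    (B : BialgData k H) (T Tinv : H →ₗ[k] H)
    (hB : B.IsBialgebra) (hT : B.IsWeakAntipode T)
    (hanti : B.IsAntiBialgebraHom T)
    (hinv₁ : Tinv ∘ₗ T = LinearMap.id) (hinv₂ : T ∘ₗ Tinv = LinearMap.id) :
    B.Perfect T ↔
      ∀ x y : H,
        B.mul ((B.conv T LinearMap.id) x ⊗ₜ y)
          = B.mul (y ⊗ₜ (B.conv T LinearMap.id) x) := by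
  have hTmul : ∀ x y : H, T (B.mul (x ⊗ₜ y)) = B.mul (T y ⊗ₜ T x) := hanti.1
  have hTcomul := hanti.2.2.1
  have hTinj : ∀ a b : H, T a = T b → a = b := by
    intro a b h
    have h2 := congrArg Tinv h
    have ha : Tinv (T a) = a := by
      have := LinearMap.congr_fun hinv₁ a
      simpa using this
    have hb : Tinv (T b) = b := by
      have := LinearMap.congr_fun hinv₁ b
      simpa using this
    rw [ha, hb] at h2
    exact h2
  have hTsurj : ∀ a : H, T (Tinv a) = a := by
    intro a
    have := LinearMap.congr_fun hinv₂ a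
    simpa using this
  have hkey : ∀ x : H, T ((B.conv LinearMap.id T) x) = (B.conv T LinearMap.id) (T x) := by
    intro x
    simp only [BialgData.conv, LinearMap.comp_apply]
    rw [hTcomul x]
    induction B.comul x using TensorProduct.induction_on with
    | zero => simp
    | tmul a b => simp [hTmul]
    | add u v hu hv => simp only [map_add, hu, hv]
  constructor
  · intro hP x y
    have hx : T (Tinv x) = x := hTsurj x
    have hy : T (Tinv y) = y := hTsurj y
    calc B.mul ((B.conv T LinearMap.id) x ⊗ₜ y)
        = B.mul ((B.conv T LinearMap.id) (T (Tinv x)) ⊗ₜ T (Tinv y)) := by rw [hx, hy]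
      _ = B.mul (T ((B.conv LinearMap.id T) (Tinv x)) ⊗ₜ T (Tinv y)) := by
            rw [hkey (Tinv x)]
      _ = T (B.mul (Tinv y ⊗ₜ (B.conv LinearMap.id T) (Tinv x))) := (hTmul _ _).symm
      _ = T (B.mul ((B.conv LinearMap.id T) (Tinv x) ⊗ₜ Tinv y)) := by
            rw [hP.2 (Tinv x) (Tinv y)]
      _ = B.mul (T (Tinv y) ⊗ₜ T ((B.conv LinearMap.id T) (Tinv x))) := hTmul _ _
      _ = B.mul (y ⊗ₜ (B.conv T LinearMap.id) x) := by rw [hkey (Tinv x), hx, hy]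
  · intro h
    refine ⟨hanti, ?_⟩
    intro x y
    apply hTinj
    calc T (B.mul ((B.conv LinearMap.id T) x ⊗ₜ y))
        = B.mul (T y ⊗ₜ T ((B.conv LinearMap.id T) x)) := hTmul _ _
      _ = B.mul (T y ⊗ₜ (B.conv T LinearMap.id) (T x)) := by rw [hkey x]
      _ = B.mul ((B.conv T LinearMap.id) (T x) ⊗ₜ T y) := (h (T x) (T y)).symm
      _ = B.mul (T ((B.conv LinearMap.id T) x) ⊗ₜ T y) := by rw [hkey x]
      _ = T (B.mul (y ⊗ₜ (B.conv LinearMap.id T) x)) := (hTmul _ _).symm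
end
end

section
/- Let H be a finite-dimensional weak Hopf algebra over a field k whose weak antipode T is an invertible anti-bialgebra morphism. Then H is coperfect, i.e. Σ x'T(x'') ⊗ x''' = Σ x''T(x''') ⊗ x' for all x ∈ H, if and only if Σ T(x')x'' ⊗ x''' = Σ T(x'')x''' ⊗ x' for all x ∈ H. -/
noncomputable section

open TensorProduct

section Aux

variable {k : Type} [Field k] {H : Type} [AddCommGroup H] [Module k H]

/-- `(id ∗ T) ∘ T = T ∘ (T ∗ id)` when `T` is an anti-bialgebra morphism. -/
private lemma conv_swap_aux {B : BialgData k H} {T : H →ₗ[k] H}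
    (hanti : B.IsAntiBialgebraHom T) (x : H) :
    (B.conv LinearMap.id T) (T x) = T ((B.conv T LinearMap.id) x) := by
  obtain ⟨hm, -, hc, -⟩ := hanti
  simp only [BialgData.conv, LinearMap.comp_apply]
  rw [hc x]
  generalize B.comul x = u
  induction u using TensorProduct.induction_on with
  | zero => simp
  | tmul a c =>
      simp only [TensorProduct.map_tmul, TensorProduct.comm_tmul, LinearMap.id_apply]
      exact (hm (T a) c).symm
  | add u v hu hv => simp [map_add, hu, hv]

private lemma keyA {B : BialgData k H} {T : H →ₗ[k] H}
    (hanti : B.IsAntiBialgebraHom T) (x : H) :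
    (TensorProduct.map (B.conv LinearMap.id T) LinearMap.id) (B.comul (T x))
      = (TensorProduct.map T T)
          ((TensorProduct.comm k H H)
            ((TensorProduct.map LinearMap.id (B.conv T LinearMap.id)) (B.comul x))) := by
  rw [hanti.2.2.1 x]
  generalize B.comul x = u
  induction u using TensorProduct.induction_on with
  | zero => simp
  | tmul a b =>
      simp only [TensorProduct.map_tmul, TensorProduct.comm_tmul, LinearMap.id_apply]
      rw [conv_swap_aux hanti]
  | add u v hu hv => simp [map_add, hu, hv]

private lemma keyA' {B : BialgData k H} {T : H →ₗ[k] H}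
    (hanti : B.IsAntiBialgebraHom T) (x : H) :
    (TensorProduct.comm k H H)
        ((TensorProduct.map LinearMap.id (B.conv LinearMap.id T)) (B.comul (T x)))
      = (TensorProduct.map T T)
          ((TensorProduct.map (B.conv T LinearMap.id) LinearMap.id) (B.comul x)) := by
  rw [hanti.2.2.1 x]
  generalize B.comul x = u
  induction u using TensorProduct.induction_on with
  | zero => simp
  | tmul a b =>
      simp only [TensorProduct.map_tmul, TensorProduct.comm_tmul, LinearMap.id_apply]
      rw [conv_swap_aux hanti]
  | add u v hu hv => simp [map_add, hu, hv]

end Aux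

/-- for a finite-dimensional weak Hopf algebra `H` whose weak
antipode `T` is an invertible anti-bialgebra morphism, `H` is coperfect
(`Σ x'T(x'') ⊗ x''' = Σ x''T(x''') ⊗ x'`) if and only if
`Σ T(x')x'' ⊗ x''' = Σ T(x'')x''' ⊗ x'` for all `x`. -/
theorem coperfect_iff_conv_antipode_id_version
    {k : Type} [Field k] {H : Type} [AddCommGroup H] [Module k H]
    [FiniteDimensional k H]
    (B : BialgData k H) (T Tinv : H →ₗ[k] H)
    (hB : B.IsBialgebra) (hT : B.IsWeakAntipode T)
    (hanti : B.IsAntiBialgebraHom T)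
    (hinv₁ : Tinv ∘ₗ T = LinearMap.id) (hinv₂ : T ∘ₗ Tinv = LinearMap.id) :
    B.Coperfect T ↔
      ∀ x : H,
        (TensorProduct.map (B.conv T LinearMap.id) LinearMap.id) (B.comul x)
          = (TensorProduct.comm k H H)
              ((TensorProduct.map LinearMap.id (B.conv T LinearMap.id)) (B.comul x)) := by
  have hti : ∀ a : H, Tinv (T a) = a := fun a => LinearMap.congr_fun hinv₁ a
  have hit : ∀ a : H, T (Tinv a) = a := fun a => LinearMap.congr_fun hinv₂ a
  have hTT : ∀ u : H ⊗[k] H,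
      (TensorProduct.map Tinv Tinv) ((TensorProduct.map T T) u) = u := by
    intro u
    induction u using TensorProduct.induction_on with
    | zero => simp
    | tmul a b => simp [hti]
    | add u v hu hv => simp [map_add, hu, hv]
  constructor
  · rintro ⟨-, hcop⟩ x
    have h := hcop (T x)
    rw [keyA hanti x, keyA' hanti x] at h
    have h2 := congrArg (TensorProduct.map Tinv Tinv) h
    rw [hTT, hTT] at h2
    exact h2.symm
  · intro hC
    refine ⟨hanti, fun x => ?_⟩
    have h1 := keyA hanti (Tinv x)
    have h2 := keyA' hanti (Tinv x)
    rw [hit x] at h1 h2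
    rw [h1, h2, hC (Tinv x)]
end
end
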